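/- Let {G(t,s) : t ≥ s ≥ 0} be a family of operators on C_b(ℝ^d) such that: (a) each G(t,s) is given by a Markov transition kernel, i.e. (G(t,s)f)(x) = ∫_{ℝ^d} f dk_{t,s,x} where each k_{t,s,x} is a Borel probability measure and x ↦ k_{t,s,x}(B) is Borel measurable; (b) G(t,s) maps C_b(ℝ^d) into C_b(ℝ^d); (c) the evolution law G(t,s)f = G(t,r)(G(r,s)f) holds for all t ≥ r ≥ s ≥ 0 and f ∈ C_b(ℝ^d); and (d) {μ_t : t ≥ 0} is an evolution system of measures for G(t,s). Then for every f ∈ C_b(ℝ^d), every p ∈ [1,+∞) and every s ≥ 0, the function t ↦ (∫_{ℝ^d} |G(t,s)f − m_s(f)|^p dμ_t)^{1/p} is nonincreasing on [s,+∞). -/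
import Mathlib


open MeasureTheory Filter Topology Metric Set

noncomputable section

abbrev Ed (d : ℕ) := EuclideanSpace ℝ (Fin d)

/-- `f` belongs to `C_b(ℝ^d)`: it is bounded and continuous. -/
def IsCb {d : ℕ} (f : Ed d → ℝ) : Prop :=
  Continuous f ∧ ∃ M, ∀ x, |f x| ≤ M

/-- A bounded continuous function is integrable with respect to any probability measure. -/
lemma IsCb.integrable {d : ℕ} {f : Ed d → ℝ} (hf : IsCb f) (ν : Measure (Ed d))
    [IsProbabilityMeasure ν] : Integrable f ν := by
  obtain ⟨hc, M, hM⟩ := hf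
  exact (integrable_const M).mono' hc.aestronglyMeasurable
    (Filter.Eventually.of_forall fun x => by simpa [Real.norm_eq_abs] using hM x)

lemma IsCb.sub_const {d : ℕ} {f : Ed d → ℝ} (hf : IsCb f) (c : ℝ) :
    IsCb (fun x => f x - c) := by
  obtain ⟨hc, M, hM⟩ := hf
  refine ⟨hc.sub continuous_const, M + |c|, fun x => ?_⟩
  calc |f x - c| ≤ |f x| + |c| := abs_sub _ _
    _ ≤ M + |c| := by linarith [hM x]

lemma IsCb.abs_rpow {d : ℕ} {f : Ed d → ℝ} (hf : IsCb f) {p : ℝ} (hp : 0 ≤ p) :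
    IsCb (fun x => |f x| ^ p) := by
  obtain ⟨hc, M, hM⟩ := hf
  refine ⟨(Real.continuous_rpow_const hp).comp (continuous_abs.comp hc), |M| ^ p, fun x => ?_⟩
  rw [abs_of_nonneg (Real.rpow_nonneg (abs_nonneg _) p)]
  exact Real.rpow_le_rpow (abs_nonneg _) ((hM x).trans (le_abs_self M)) hp

/-- For an evolution family of Markov kernel operators admitting an
evolution system of measures `{μ_t}`, the function
`t ↦ ‖G(t,s)f − m_s(f)‖_{L^p(μ_t)}` is nonincreasing on `[s,∞)`. -/
theorem Lp_norm_nonincreasing (d : ℕ)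
    (G : ℝ → ℝ → (Ed d → ℝ) → Ed d → ℝ)
    (k : ℝ → ℝ → Ed d → Measure (Ed d))
    (hkprob : ∀ t s x, IsProbabilityMeasure (k t s x))
    (hkmeas : ∀ t s, ∀ B : Set (Ed d), MeasurableSet B → Measurable fun x => k t s x B)
    (hkrepr : ∀ t s, 0 ≤ s → s ≤ t → ∀ f : Ed d → ℝ, IsCb f → ∀ x,
      G t s f x = ∫ y, f y ∂k t s x)
    (hmaps : ∀ t s, 0 ≤ s → s ≤ t → ∀ f : Ed d → ℝ, IsCb f → IsCb (G t s f))
    (hlaw : ∀ t r s, 0 ≤ s → s ≤ r → r ≤ t → ∀ f : Ed d → ℝ, IsCb f →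
      G t s f = G t r (G r s f))
    (μ : ℝ → Measure (Ed d)) (hμprob : ∀ t, 0 ≤ t → IsProbabilityMeasure (μ t))
    (hinv : ∀ f : Ed d → ℝ, IsCb f → ∀ s t, 0 ≤ s → s ≤ t →
      ∫ x, G t s f x ∂μ t = ∫ x, f x ∂μ s)
    (f : Ed d → ℝ) (hf : IsCb f) (p : ℝ) (hp : 1 ≤ p) (s : ℝ) (hs : 0 ≤ s) :
    AntitoneOn (fun t => (∫ x, |G t s f x - ∫ y, f y ∂μ s| ^ p ∂μ t) ^ (1/p)) (Ici s) := by
  have hp0 : (0:ℝ) < p := lt_of_lt_of_le one_pos hp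
  intro t₁ ht₁ t₂ ht₂ h12
  simp only [mem_Ici] at ht₁ ht₂
  set m : ℝ := ∫ y, f y ∂μ s with hm
  have ht₁0 : 0 ≤ t₁ := hs.trans ht₁
  have ht₂0 : 0 ≤ t₂ := ht₁0.trans h12
  haveI := hμprob t₁ ht₁0
  haveI := hμprob t₂ ht₂0
  -- g = G t₁ s f - m, bounded continuous
  set g : Ed d → ℝ := fun x => G t₁ s f x - m with hg
  have hgcb : IsCb g := (hmaps t₁ s hs ht₁ f hf).sub_const m
  -- h = |g|^p, bounded continuous
  set h : Ed d → ℝ := fun x => |g x| ^ p with hh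
  have hhcb : IsCb h := hgcb.abs_rpow hp0.le
  -- pointwise bound: |G t₂ s f x - m|^p ≤ G t₂ t₁ h x
  have key : ∀ x, |G t₂ s f x - m| ^ p ≤ G t₂ t₁ h x := by
    intro x
    haveI := hkprob t₂ t₁ x
    have hrepr1 : G t₂ s f x = ∫ y, G t₁ s f y ∂k t₂ t₁ x := by
      rw [hlaw t₂ t₁ s hs ht₁ h12 f hf]
      exact hkrepr t₂ t₁ ht₁0 h12 _ (hmaps t₁ s hs ht₁ f hf) x
    have hgint : Integrable g (k t₂ t₁ x) := hgcb.integrable _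
    have habs : Integrable (fun y => |g y|) (k t₂ t₁ x) := hgint.abs
    have hhint : Integrable h (k t₂ t₁ x) := hhcb.integrable _
    have h1 : G t₂ s f x - m = ∫ y, g y ∂k t₂ t₁ x := by
      rw [hrepr1, hg]
      rw [integral_sub ((hmaps t₁ s hs ht₁ f hf).integrable _) (integrable_const m)]
      simp
    rw [h1, hkrepr t₂ t₁ ht₁0 h12 h hhcb x]
    calc |∫ y, g y ∂k t₂ t₁ x| ^ p
        ≤ (∫ y, |g y| ∂k t₂ t₁ x) ^ p := by
          apply Real.rpow_le_rpow (abs_nonneg _) _ hp0.le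
          simpa [Real.norm_eq_abs] using norm_integral_le_integral_norm (μ := k t₂ t₁ x) g
      _ ≤ ∫ y, |g y| ^ p ∂k t₂ t₁ x := by
          have hconv : ConvexOn ℝ (Ici (0:ℝ)) (fun x : ℝ => x ^ p) := convexOn_rpow hp
          exact hconv.map_integral_le
            ((Real.continuous_rpow_const hp0.le).continuousOn) isClosed_Ici
            (Filter.Eventually.of_forall fun y => mem_Ici.mpr (abs_nonneg _)) habs hhint
  -- now compare the integrals
  have step1 : ∫ x, |G t₂ s f x - m| ^ p ∂μ t₂ ≤ ∫ x, G t₂ t₁ h x ∂μ t₂ := by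
    apply integral_mono ?_ ((hmaps t₂ t₁ ht₁0 h12 h hhcb).integrable _) key
    · exact (((hmaps t₂ s hs (ht₁.trans h12) f hf).sub_const m).abs_rpow hp0.le).integrable _
  have step2 : ∫ x, G t₂ t₁ h x ∂μ t₂ = ∫ x, h x ∂μ t₁ := hinv h hhcb t₁ t₂ ht₁0 h12
  have hfinal : ∫ x, |G t₂ s f x - m| ^ p ∂μ t₂ ≤ ∫ x, |G t₁ s f x - m| ^ p ∂μ t₁ := by
    rw [step2] at step1; exact step1
  exact Real.rpow_le_rpow (integral_nonneg fun x => Real.rpow_nonneg (abs_nonneg _) p)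
    hfinal (by positivity)
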